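/- arXiv:1005.5557 — 2 statements merged into one kernel-verified Lean document; each statement's English description precedes it below -/
import Mathlib

section
/- In the polynomial ring in variables x_{12},...,x_{45} (indices 1≤i<j≤5, six variables x_{23},x_{24},x_{25},x_{34},x_{35},x_{45} plus x_{12},x_{13},x_{14},x_{15}) and x_{1345},x_{1245},x_{1235},x_{1234}, the ideal generated by (i) the four entries of the product of the 5×4 matrix M (with rows (x_{12},x_{13},x_{14},x_{15}), (0,x_{23},x_{24},x_{25}), (-x_{23},0,x_{34},x_{35}), (-x_{24},-x_{34},0,x_{45}), (-x_{25},-x_{35},-x_{45},0)) with the column vector (x_{1345},x_{1245},x_{1235},x_{1234}), together with (ii) the quadric x_{23}x_{45} - x_{24}x_{35} + x_{34}x_{25}, equals the ideal generated by the single quadric x_{12}x_{1345}+x_{13}x_{1245}+x_{14}x_{1235}+x_{15}x_{1234} together with the five 4×4 Pfaffians of the 5×5 antisymmetric matrix with upper-triangular entries (row 1: x_{1234}, -x_{1235}, x_{1245}, -x_{1345}; row 2: x_{23}, x_{24}, x_{34}; row 3: x_{25}, x_{35}; row 4: x_{45}). -/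
open MvPolynomial

noncomputable section

/-- The polynomial ring `ℤ[x₁₂,…,x₄₅, x₁₃₄₅, x₁₂₄₅, x₁₂₃₅, x₁₂₃₄]` in 14 variables. -/
abbrev R14 := MvPolynomial (Fin 14) ℤ

namespace MukaiS10

def x12 : R14 := X 0
def x13 : R14 := X 1
def x14 : R14 := X 2
def x15 : R14 := X 3
def x23 : R14 := X 4
def x24 : R14 := X 5
def x25 : R14 := X 6
def x34 : R14 := X 7
def x35 : R14 := X 8
def x45 : R14 := X 9
def x1234 : R14 := X 10
def x1235 : R14 := X 11
def x1245 : R14 := X 12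
def x1345 : R14 := X 13

/-- the ideal computation in Theorem 2.1 of the paper.
The ideal generated by (i) the entries of the product of the `5 × 4` matrix with rows
`(x₁₂,x₁₃,x₁₄,x₁₅)`, `(0,x₂₃,x₂₄,x₂₅)`, `(-x₂₃,0,x₃₄,x₃₅)`, `(-x₂₄,-x₃₄,0,x₄₅)`,
`(-x₂₅,-x₃₅,-x₄₅,0)` with the column `(x₁₃₄₅,x₁₂₄₅,x₁₂₃₅,x₁₂₃₄)`, together with
(ii) the quadric `x₂₃x₄₅ - x₂₄x₃₅ + x₃₄x₂₅`, equals the ideal generated by the single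
quadric `x₁₂x₁₃₄₅ + x₁₃x₁₂₄₅ + x₁₄x₁₂₃₅ + x₁₅x₁₂₃₄` together with the five `4 × 4`
Pfaffians of the `5 × 5` antisymmetric matrix with upper triangle
row 1: `(x₁₂₃₄, -x₁₂₃₅, x₁₂₄₅, -x₁₃₄₅)`; row 2: `(x₂₃, x₂₄, x₃₄)`;
row 3: `(x₂₅, x₃₅)`; row 4: `(x₄₅)`. -/
theorem projection_ideal_eq :
    Ideal.span ({
      x12 * x1345 + x13 * x1245 + x14 * x1235 + x15 * x1234,
      x23 * x1245 + x24 * x1235 + x25 * x1234,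
      -x23 * x1345 + x34 * x1235 + x35 * x1234,
      -x24 * x1345 - x34 * x1245 + x45 * x1234,
      -x25 * x1345 - x35 * x1245 - x45 * x1235,
      x23 * x45 - x24 * x35 + x34 * x25 } : Set R14)
    = Ideal.span ({
      x12 * x1345 + x13 * x1245 + x14 * x1235 + x15 * x1234,
      -- Pfaffian omitting index 1
      x23 * x45 - x24 * x35 + x34 * x25,
      -- Pfaffian omitting index 2
      (-x1235) * x45 - x1245 * x35 + (-x1345) * x25,
      -- Pfaffian omitting index 3
      x1234 * x45 - x1245 * x34 + (-x1345) * x24,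
      -- Pfaffian omitting index 4
      x1234 * x35 - (-x1235) * x34 + (-x1345) * x23,
      -- Pfaffian omitting index 5
      x1234 * x25 - (-x1235) * x24 + x1245 * x23 } : Set R14) := by
  have h2 : (-x1235) * x45 - x1245 * x35 + (-x1345) * x25
      = -x25 * x1345 - x35 * x1245 - x45 * x1235 := by unfold x25 x35 x45 x1235 x1245 x1345; ring
  have h3 : x1234 * x45 - x1245 * x34 + (-x1345) * x24
      = -x24 * x1345 - x34 * x1245 + x45 * x1234 := by unfold x24 x34 x45 x1234 x1245 x1345; ring
  have h4 : x1234 * x35 - (-x1235) * x34 + (-x1345) * x23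
      = -x23 * x1345 + x34 * x1235 + x35 * x1234 := by unfold x23 x34 x35 x1234 x1235 x1345; ring
  have h5 : x1234 * x25 - (-x1235) * x24 + x1245 * x23
      = x23 * x1245 + x24 * x1235 + x25 * x1234 := by unfold x23 x24 x25 x1234 x1235 x1245; ring
  rw [h2, h3, h4, h5]
  congr 1
  ext f
  simp only [Set.mem_insert_iff, Set.mem_singleton_iff]
  tauto

end MukaiS10
end
end

section
/- Under the substitution a = f, and identifying (u, x_{11},x_{12},x_{13},x_{22},x_{23},x_{33}, y_{11},y_{12},y_{13},y_{22},y_{23},y_{33}, z) = (f, −d, e, b, g, a, l, h+b, −k, d, −e, −c, m, n), the ideal generated by (i) all 4×4 Pfaffians of the matrix M_{G2} (from the G_2 presentation) not involving the variable i, together with (ii) the quadric a² − g·l + f·(h+b), equals the ideal of the defining equations of LG(3,6) (the relations u·Y = adj X, X·Y = Y·X = uz·I, z·X = adj Y for the symmetric matrices X, Y built from the identified coordinates) restricted to the codimension 2 linear subspace implied by the identification (e.g. x_{11} = −d = y_{13}, x_{12} = e = −y_{23}). -/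
open MvPolynomial

noncomputable section

/-- Polynomial ring in the 13 coordinates `a, b, c, d, e, f, g, h, i, k, l, m, n` of
the adjoint `G₂`-variety, restricted to the nodal hyperplane `{e = j}` (so that the
variable `j` is replaced by `e` throughout). -/
abbrev RG2 := MvPolynomial (Fin 13) ℚ

namespace G2toLG36

def a : RG2 := X 0
def b : RG2 := X 1
def c : RG2 := X 2
def d : RG2 := X 3
def e : RG2 := X 4
def f : RG2 := X 5
def g : RG2 := X 6
def h : RG2 := X 7
def i : RG2 := X 8
def k : RG2 := X 9
def l : RG2 := X 10
def m : RG2 := X 11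
def n : RG2 := X 12

/-- The twenty-five `4 × 4` Pfaffians of the matrix `M_{G₂}` (with `j = e`) not
involving the variable `i`, i.e. the Pfaffians `Pf_{pqrs}` for the 4-subsets
`{p<q<r<s} ⊆ {1,…,7}` avoiding the pair `(1,6)`. -/
def pfaff : Fin 25 → RG2 := ![
  (-f) * m - e * e + g * (-d),
  (-f) * n - e * k + h * (-d),
  (-f) * c - e * b + a * (-d),
  (-f) * c - g * k + h * e,
  (-f) * d - g * b + a * e,
  (-f) * e - h * b + a * k,
  e * c - g * n + h * m,
  e * d - g * c + a * m,
  e * e - h * c + a * n,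
  g * e - h * d + a * c,
  (-d) * c - e * n + k * m,
  (-d) * (-b) - e * (-g - k) + l * m,
  (-d) * d - e * c + b * m,
  (-d) * a - k * (-g - k) + l * n,
  (-d) * e - k * c + b * n,
  (-d) * f - l * c + b * (-g - k),
  e * a - k * (-b) + l * c,
  e * e - k * d + b * c,
  e * f - l * d + b * (-b),
  k * f - l * e + b * a,
  m * a - n * (-b) + (-g - k) * c,
  m * e - n * d + c * c,
  m * f - (-g - k) * d + c * (-b),
  n * f - (-g - k) * e + c * a,
  c * f - (-b) * e + d * a]

/-- The symmetric matrix `X` of `LG(3,6)` under the identification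
`(x₁₁,x₁₂,x₁₃,x₂₂,x₂₃,x₃₃) = (-d, e, b, g, a, l)`. -/
def XM : Matrix (Fin 3) (Fin 3) RG2 := !![-d, e, b; e, g, a; b, a, l]

/-- The symmetric matrix `Y` of `LG(3,6)` under the identification
`(y₁₁,y₁₂,y₁₃,y₂₂,y₂₃,y₃₃) = (h + b, -k, d, -e, -c, m)`. -/
def YM : Matrix (Fin 3) (Fin 3) RG2 := !![h + b, -k, d; -k, -e, -c; d, -c, m]

/-- The homogenizing coordinate `u = f` of `LG(3,6)`. -/
def u : RG2 := f

/-- The determinant coordinate `z = n` of `LG(3,6)`. -/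
def z : RG2 := n

/-- The defining equations of `LG(3,6)` under the identification:
entries of `u•Y - adj X`, `X·Y - uz·1`, `Y·X - uz·1` and `z•X - adj Y`. -/
def LGeqs : Set RG2 :=
  (Set.range fun p : Fin 3 × Fin 3 => (u • YM - XM.adjugate) p.1 p.2) ∪
  (Set.range fun p : Fin 3 × Fin 3 =>
    (XM * YM - (u * z) • (1 : Matrix (Fin 3) (Fin 3) RG2)) p.1 p.2) ∪
  (Set.range fun p : Fin 3 × Fin 3 =>
    (YM * XM - (u * z) • (1 : Matrix (Fin 3) (Fin 3) RG2)) p.1 p.2) ∪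
  (Set.range fun p : Fin 3 × Fin 3 => (z • XM - YM.adjugate) p.1 p.2)

def MA : Matrix (Fin 3) (Fin 3) RG2 :=
  !![a * a + b * f + f * h - g * l, -a * b + e * l - f * k, -a * e + b * g + d * f;
    -a * b + e * l - f * k, b * b + d * l - e * f, -a * d - b * e - c * f;
    -a * e + b * g + d * f, -a * d - b * e - c * f, d * g + e * e + f * m]

def MB : Matrix (Fin 3) (Fin 3) RG2 :=
  !![-d * h - e * k - f * n, -b * c + d * k - e * e, b * m - c * e - d * d;
    a * d + b * e + e * h - g * k, -a * c - e * g - e * k - f * n, a * m - c * g + d * e;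
    -a * k + b * b + b * h + d * l, -a * e - b * k - c * l, -a * c + b * d - f * n + l * m]

def MC : Matrix (Fin 3) (Fin 3) RG2 :=
  !![-d * h - e * k - f * n, a * d + b * e + e * h - g * k, -a * k + b * b + b * h + d * l;
    -b * c + d * k - e * e, -a * c - e * g - e * k - f * n, -a * e - b * k - c * l;
    b * m - c * e - d * d, a * m - c * g + d * e, -a * c + b * d - f * n + l * m]

def MD : Matrix (Fin 3) (Fin 3) RG2 :=
  !![c * c - d * n + e * m, c * d + e * n - k * m, b * n - c * k - d * e;
    c * d + e * n - k * m, -b * m + d * d + g * n - h * m, a * n - b * c - c * h + d * k;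
    b * n - c * k - d * e, a * n - b * c - c * h + d * k, b * e + e * h + k * k + l * n]

set_option maxHeartbeats 1000000 in
lemma hMA : u • YM - XM.adjugate = MA := by
  rw [u, YM, XM, MA, Matrix.adjugate_fin_three, Matrix.smul_of]
  refine Matrix.ext fun i j => ?_
  fin_cases i <;> fin_cases j <;> simp <;> ring

set_option maxHeartbeats 1000000 in
lemma hMB : XM * YM - (u * z) • (1 : Matrix (Fin 3) (Fin 3) RG2) = MB := by
  rw [u, z, XM, YM, MB, Matrix.mul_fin_three]
  refine Matrix.ext fun i j => ?_
  fin_cases i <;> fin_cases j <;> simp [Matrix.one_apply] <;> ring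

set_option maxHeartbeats 1000000 in
lemma hMC : YM * XM - (u * z) • (1 : Matrix (Fin 3) (Fin 3) RG2) = MC := by
  rw [u, z, XM, YM, MC, Matrix.mul_fin_three]
  refine Matrix.ext fun i j => ?_
  fin_cases i <;> fin_cases j <;> simp [Matrix.one_apply] <;> ring

set_option maxHeartbeats 1000000 in
lemma hMD : z • XM - YM.adjugate = MD := by
  rw [z, XM, YM, MD, Matrix.adjugate_fin_three, Matrix.smul_of]
  refine Matrix.ext fun i j => ?_
  fin_cases i <;> fin_cases j <;> simp <;> ring

lemma hLG : LGeqs =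
    (Set.range fun p : Fin 3 × Fin 3 => MA p.1 p.2) ∪
    (Set.range fun p : Fin 3 × Fin 3 => MB p.1 p.2) ∪
    (Set.range fun p : Fin 3 × Fin 3 => MC p.1 p.2) ∪
    (Set.range fun p : Fin 3 × Fin 3 => MD p.1 p.2) := by
  rw [LGeqs]
  simp only [hMA, hMB, hMC, hMD]

lemma memA (p : Fin 3 × Fin 3) : MA p.1 p.2 ∈ Ideal.span LGeqs :=
  Ideal.subset_span (by rw [hLG]; exact Set.mem_union_left _ (Set.mem_union_left _ (Set.mem_union_left _ ⟨p, rfl⟩)))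

lemma memB (p : Fin 3 × Fin 3) : MB p.1 p.2 ∈ Ideal.span LGeqs :=
  Ideal.subset_span (by rw [hLG]; exact Set.mem_union_left _ (Set.mem_union_left _ (Set.mem_union_right _ ⟨p, rfl⟩)))

lemma memC (p : Fin 3 × Fin 3) : MC p.1 p.2 ∈ Ideal.span LGeqs :=
  Ideal.subset_span (by rw [hLG]; exact Set.mem_union_left _ (Set.mem_union_right _ ⟨p, rfl⟩))

lemma memD (p : Fin 3 × Fin 3) : MD p.1 p.2 ∈ Ideal.span LGeqs :=
  Ideal.subset_span (by rw [hLG]; exact Set.mem_union_right _ ⟨p, rfl⟩)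

lemma memPf (t : Fin 25) :
    pfaff t ∈ Ideal.span (Set.range pfaff ∪ {a ^ 2 - g * l + f * (h + b)}) :=
  Ideal.subset_span (Set.mem_union_left _ ⟨t, rfl⟩)

lemma memQ :
    (a ^ 2 - g * l + f * (h + b)) ∈ Ideal.span (Set.range pfaff ∪ {a ^ 2 - g * l + f * (h + b)}) :=
  Ideal.subset_span (Set.mem_union_right _ rfl)

set_option maxHeartbeats 4000000 in
/-- the ideal identification in the proof of Theorem 2.3 of the
paper, special nodal section `{e = j}` of `G₂`, node at `i = 1`. The ideal generated
by the `4 × 4` Pfaffians of `M_{G₂}` not involving `i` together with the quadric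
`a² - g·l + f·(h + b)` equals the ideal of the defining equations of `LG(3,6)` under
the identification
`(u, x₁₁,x₁₂,x₁₃,x₂₂,x₂₃,x₃₃, y₁₁,y₁₂,y₁₃,y₂₂,y₂₃,y₃₃, z)
  = (f, -d, e, b, g, a, l, h+b, -k, d, -e, -c, m, n)`. -/
theorem g2_projection_is_LG36_section :
    Ideal.span (Set.range pfaff ∪ {a ^ 2 - g * l + f * (h + b)})
      = Ideal.span LGeqs := by
  apply le_antisymm
  · rw [Ideal.span_le]
    rintro x (⟨t, rfl⟩ | rfl)
    · fin_cases t
      · show pfaff 0 ∈ Ideal.span LGeqs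
        have h : pfaff 0 = -MA 2 2 := by
          show ((-f) * m - e * e + g * (-d) : RG2) = _
          rw [show MA 2 2 = d * g + e * e + f * m from rfl]
          ring
        rw [h]
        exact (neg_mem (memA (2, 2)))
      · show pfaff 1 ∈ Ideal.span LGeqs
        have h : pfaff 1 = MB 0 0 := by
          show ((-f) * n - e * k + h * (-d) : RG2) = _
          rw [show MB 0 0 = -d * h - e * k - f * n from rfl]
          ring
        rw [h]
        exact (memB (0, 0))
      · show pfaff 2 ∈ Ideal.span LGeqs
        have h : pfaff 2 = MA 1 2 := by
          show ((-f) * c - e * b + a * (-d) : RG2) = _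
          rw [show MA 1 2 = -a * d - b * e - c * f from rfl]
          ring
        rw [h]
        exact (memA (1, 2))
      · show pfaff 3 ∈ Ideal.span LGeqs
        have h : pfaff 3 = MA 1 2 + MB 1 0 := by
          show ((-f) * c - g * k + h * e : RG2) = _
          rw [show MA 1 2 = -a * d - b * e - c * f from rfl, show MB 1 0 = a * d + b * e + e * h - g * k from rfl]
          ring
        rw [h]
        exact (Ideal.add_mem _ (memA (1, 2)) (memB (1, 0)))
      · show pfaff 4 ∈ Ideal.span LGeqs
        have h : pfaff 4 = -MA 0 2 := by
          show ((-f) * d - g * b + a * e : RG2) = _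
          rw [show MA 0 2 = -a * e + b * g + d * f from rfl]
          ring
        rw [h]
        exact (neg_mem (memA (0, 2)))
      · show pfaff 5 ∈ Ideal.span LGeqs
        have h : pfaff 5 = MA 1 1 - MB 2 0 := by
          show ((-f) * e - h * b + a * k : RG2) = _
          rw [show MA 1 1 = b * b + d * l - e * f from rfl, show MB 2 0 = -a * k + b * b + b * h + d * l from rfl]
          ring
        rw [h]
        exact (Ideal.sub_mem _ (memA (1, 1)) (memB (2, 0)))
      · show pfaff 6 ∈ Ideal.span LGeqs
        have h : pfaff 6 = -MB 0 2 - MD 1 1 := by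
          show (e * c - g * n + h * m : RG2) = _
          rw [show MB 0 2 = b * m - c * e - d * d from rfl, show MD 1 1 = -b * m + d * d + g * n - h * m from rfl]
          ring
        rw [h]
        exact (Ideal.sub_mem _ (neg_mem (memB (0, 2))) (memD (1, 1)))
      · show pfaff 7 ∈ Ideal.span LGeqs
        have h : pfaff 7 = MB 1 2 := by
          show (e * d - g * c + a * m : RG2) = _
          rw [show MB 1 2 = a * m - c * g + d * e from rfl]
          ring
        rw [h]
        exact (memB (1, 2))
      · show pfaff 8 ∈ Ideal.span LGeqs
        have h : pfaff 8 = -MB 0 1 + MD 1 2 := by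
          show (e * e - h * c + a * n : RG2) = _
          rw [show MB 0 1 = -b * c + d * k - e * e from rfl, show MD 1 2 = a * n - b * c - c * h + d * k from rfl]
          ring
        rw [h]
        exact (Ideal.add_mem _ (neg_mem (memB (0, 1))) (memD (1, 2)))
      · show pfaff 9 ∈ Ideal.span LGeqs
        have h : pfaff 9 = MB 0 0 - MB 1 1 := by
          show (g * e - h * d + a * c : RG2) = _
          rw [show MB 0 0 = -d * h - e * k - f * n from rfl, show MB 1 1 = -a * c - e * g - e * k - f * n from rfl]
          ring
        rw [h]
        exact (Ideal.sub_mem _ (memB (0, 0)) (memB (1, 1)))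
      · show pfaff 10 ∈ Ideal.span LGeqs
        have h : pfaff 10 = -MD 0 1 := by
          show ((-d) * c - e * n + k * m : RG2) = _
          rw [show MD 0 1 = c * d + e * n - k * m from rfl]
          ring
        rw [h]
        exact (neg_mem (memD (0, 1)))
      · show pfaff 11 ∈ Ideal.span LGeqs
        have h : pfaff 11 = -MB 1 1 + MB 2 2 := by
          show ((-d) * (-b) - e * (-g - k) + l * m : RG2) = _
          rw [show MB 1 1 = -a * c - e * g - e * k - f * n from rfl, show MB 2 2 = -a * c + b * d - f * n + l * m from rfl]
          ring
        rw [h]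
        exact (Ideal.add_mem _ (neg_mem (memB (1, 1))) (memB (2, 2)))
      · show pfaff 12 ∈ Ideal.span LGeqs
        have h : pfaff 12 = MB 0 2 := by
          show ((-d) * d - e * c + b * m : RG2) = _
          rw [show MB 0 2 = b * m - c * e - d * d from rfl]
          ring
        rw [h]
        exact (memB (0, 2))
      · show pfaff 13 ∈ Ideal.span LGeqs
        have h : pfaff 13 = -MB 1 0 + MD 2 2 := by
          show ((-d) * a - k * (-g - k) + l * n : RG2) = _
          rw [show MB 1 0 = a * d + b * e + e * h - g * k from rfl, show MD 2 2 = b * e + e * h + k * k + l * n from rfl]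
          ring
        rw [h]
        exact (Ideal.add_mem _ (neg_mem (memB (1, 0))) (memD (2, 2)))
      · show pfaff 14 ∈ Ideal.span LGeqs
        have h : pfaff 14 = MD 0 2 := by
          show ((-d) * e - k * c + b * n : RG2) = _
          rw [show MD 0 2 = b * n - c * k - d * e from rfl]
          ring
        rw [h]
        exact (memD (0, 2))
      · show pfaff 15 ∈ Ideal.span LGeqs
        have h : pfaff 15 = -MA 0 2 + MB 2 1 := by
          show ((-d) * f - l * c + b * (-g - k) : RG2) = _
          rw [show MA 0 2 = -a * e + b * g + d * f from rfl, show MB 2 1 = -a * e - b * k - c * l from rfl]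
          ring
        rw [h]
        exact (Ideal.add_mem _ (neg_mem (memA (0, 2))) (memB (2, 1)))
      · show pfaff 16 ∈ Ideal.span LGeqs
        have h : pfaff 16 = -MB 2 1 := by
          show (e * a - k * (-b) + l * c : RG2) = _
          rw [show MB 2 1 = -a * e - b * k - c * l from rfl]
          ring
        rw [h]
        exact (neg_mem (memB (2, 1)))
      · show pfaff 17 ∈ Ideal.span LGeqs
        have h : pfaff 17 = -MB 0 1 := by
          show (e * e - k * d + b * c : RG2) = _
          rw [show MB 0 1 = -b * c + d * k - e * e from rfl]
          ring
        rw [h]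
        exact (neg_mem (memB (0, 1)))
      · show pfaff 18 ∈ Ideal.span LGeqs
        have h : pfaff 18 = -MA 1 1 := by
          show (e * f - l * d + b * (-b) : RG2) = _
          rw [show MA 1 1 = b * b + d * l - e * f from rfl]
          ring
        rw [h]
        exact (neg_mem (memA (1, 1)))
      · show pfaff 19 ∈ Ideal.span LGeqs
        have h : pfaff 19 = -MA 0 1 := by
          show (k * f - l * e + b * a : RG2) = _
          rw [show MA 0 1 = -a * b + e * l - f * k from rfl]
          ring
        rw [h]
        exact (neg_mem (memA (0, 1)))
      · show pfaff 20 ∈ Ideal.span LGeqs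
        have h : pfaff 20 = MB 1 2 + MD 0 2 := by
          show (m * a - n * (-b) + (-g - k) * c : RG2) = _
          rw [show MB 1 2 = a * m - c * g + d * e from rfl, show MD 0 2 = b * n - c * k - d * e from rfl]
          ring
        rw [h]
        exact (Ideal.add_mem _ (memB (1, 2)) (memD (0, 2)))
      · show pfaff 21 ∈ Ideal.span LGeqs
        have h : pfaff 21 = MD 0 0 := by
          show (m * e - n * d + c * c : RG2) = _
          rw [show MD 0 0 = c * c - d * n + e * m from rfl]
          ring
        rw [h]
        exact (memD (0, 0))
      · show pfaff 22 ∈ Ideal.span LGeqs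
        have h : pfaff 22 = MA 2 2 + MB 0 1 := by
          show (m * f - (-g - k) * d + c * (-b) : RG2) = _
          rw [show MA 2 2 = d * g + e * e + f * m from rfl, show MB 0 1 = -b * c + d * k - e * e from rfl]
          ring
        rw [h]
        exact (Ideal.add_mem _ (memA (2, 2)) (memB (0, 1)))
      · show pfaff 23 ∈ Ideal.span LGeqs
        have h : pfaff 23 = -MB 1 1 := by
          show (n * f - (-g - k) * e + c * a : RG2) = _
          rw [show MB 1 1 = -a * c - e * g - e * k - f * n from rfl]
          ring
        rw [h]
        exact (neg_mem (memB (1, 1)))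
      · show pfaff 24 ∈ Ideal.span LGeqs
        have h : pfaff 24 = -MA 1 2 := by
          show (c * f - (-b) * e + d * a : RG2) = _
          rw [show MA 1 2 = -a * d - b * e - c * f from rfl]
          ring
        rw [h]
        exact (neg_mem (memA (1, 2)))
    · show (a ^ 2 - g * l + f * (h + b) : RG2) ∈ Ideal.span LGeqs
      have h : (a ^ 2 - g * l + f * (h + b) : RG2) = MA 0 0 := by
        rw [show MA 0 0 = a * a + b * f + f * h - g * l from rfl]
        ring
      rw [h]
      exact (memA (0, 0))
  · rw [Ideal.span_le, hLG]
    rintro x ((((⟨p, rfl⟩ | ⟨p, rfl⟩) | ⟨p, rfl⟩) | ⟨p, rfl⟩))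
    · obtain ⟨i1, j1⟩ := p
      fin_cases i1 <;> fin_cases j1
      · show MA 0 0 ∈ Ideal.span (Set.range pfaff ∪ {a ^ 2 - g * l + f * (h + b)})
        have h : MA 0 0 = (a ^ 2 - g * l + f * (h + b) : RG2) := by
          show (a * a + b * f + f * h - g * l : RG2) = _
          ring
        rw [h]
        exact (memQ)
      · show MA 0 1 ∈ Ideal.span (Set.range pfaff ∪ {a ^ 2 - g * l + f * (h + b)})
        have h : MA 0 1 = -pfaff 19 := by
          show (-a * b + e * l - f * k : RG2) = _
          rw [show pfaff 19 = (k * f - l * e + b * a : RG2) from rfl]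
          ring
        rw [h]
        exact (neg_mem (memPf 19))
      · show MA 0 2 ∈ Ideal.span (Set.range pfaff ∪ {a ^ 2 - g * l + f * (h + b)})
        have h : MA 0 2 = -pfaff 4 := by
          show (-a * e + b * g + d * f : RG2) = _
          rw [show pfaff 4 = ((-f) * d - g * b + a * e : RG2) from rfl]
          ring
        rw [h]
        exact (neg_mem (memPf 4))
      · show MA 1 0 ∈ Ideal.span (Set.range pfaff ∪ {a ^ 2 - g * l + f * (h + b)})
        have h : MA 1 0 = -pfaff 19 := by
          show (-a * b + e * l - f * k : RG2) = _
          rw [show pfaff 19 = (k * f - l * e + b * a : RG2) from rfl]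
          ring
        rw [h]
        exact (neg_mem (memPf 19))
      · show MA 1 1 ∈ Ideal.span (Set.range pfaff ∪ {a ^ 2 - g * l + f * (h + b)})
        have h : MA 1 1 = -pfaff 18 := by
          show (b * b + d * l - e * f : RG2) = _
          rw [show pfaff 18 = (e * f - l * d + b * (-b) : RG2) from rfl]
          ring
        rw [h]
        exact (neg_mem (memPf 18))
      · show MA 1 2 ∈ Ideal.span (Set.range pfaff ∪ {a ^ 2 - g * l + f * (h + b)})
        have h : MA 1 2 = pfaff 2 := by
          show (-a * d - b * e - c * f : RG2) = _
          rw [show pfaff 2 = ((-f) * c - e * b + a * (-d) : RG2) from rfl]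
          ring
        rw [h]
        exact (memPf 2)
      · show MA 2 0 ∈ Ideal.span (Set.range pfaff ∪ {a ^ 2 - g * l + f * (h + b)})
        have h : MA 2 0 = -pfaff 4 := by
          show (-a * e + b * g + d * f : RG2) = _
          rw [show pfaff 4 = ((-f) * d - g * b + a * e : RG2) from rfl]
          ring
        rw [h]
        exact (neg_mem (memPf 4))
      · show MA 2 1 ∈ Ideal.span (Set.range pfaff ∪ {a ^ 2 - g * l + f * (h + b)})
        have h : MA 2 1 = pfaff 2 := by
          show (-a * d - b * e - c * f : RG2) = _
          rw [show pfaff 2 = ((-f) * c - e * b + a * (-d) : RG2) from rfl]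
          ring
        rw [h]
        exact (memPf 2)
      · show MA 2 2 ∈ Ideal.span (Set.range pfaff ∪ {a ^ 2 - g * l + f * (h + b)})
        have h : MA 2 2 = -pfaff 0 := by
          show (d * g + e * e + f * m : RG2) = _
          rw [show pfaff 0 = ((-f) * m - e * e + g * (-d) : RG2) from rfl]
          ring
        rw [h]
        exact (neg_mem (memPf 0))
    · obtain ⟨i1, j1⟩ := p
      fin_cases i1 <;> fin_cases j1
      · show MB 0 0 ∈ Ideal.span (Set.range pfaff ∪ {a ^ 2 - g * l + f * (h + b)})
        have h : MB 0 0 = pfaff 1 := by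
          show (-d * h - e * k - f * n : RG2) = _
          rw [show pfaff 1 = ((-f) * n - e * k + h * (-d) : RG2) from rfl]
          ring
        rw [h]
        exact (memPf 1)
      · show MB 0 1 ∈ Ideal.span (Set.range pfaff ∪ {a ^ 2 - g * l + f * (h + b)})
        have h : MB 0 1 = -pfaff 17 := by
          show (-b * c + d * k - e * e : RG2) = _
          rw [show pfaff 17 = (e * e - k * d + b * c : RG2) from rfl]
          ring
        rw [h]
        exact (neg_mem (memPf 17))
      · show MB 0 2 ∈ Ideal.span (Set.range pfaff ∪ {a ^ 2 - g * l + f * (h + b)})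
        have h : MB 0 2 = pfaff 12 := by
          show (b * m - c * e - d * d : RG2) = _
          rw [show pfaff 12 = ((-d) * d - e * c + b * m : RG2) from rfl]
          ring
        rw [h]
        exact (memPf 12)
      · show MB 1 0 ∈ Ideal.span (Set.range pfaff ∪ {a ^ 2 - g * l + f * (h + b)})
        have h : MB 1 0 = -pfaff 2 + pfaff 3 := by
          show (a * d + b * e + e * h - g * k : RG2) = _
          rw [show pfaff 2 = ((-f) * c - e * b + a * (-d) : RG2) from rfl, show pfaff 3 = ((-f) * c - g * k + h * e : RG2) from rfl]
          ring
        rw [h]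
        exact (Ideal.add_mem _ (neg_mem (memPf 2)) (memPf 3))
      · show MB 1 1 ∈ Ideal.span (Set.range pfaff ∪ {a ^ 2 - g * l + f * (h + b)})
        have h : MB 1 1 = pfaff 1 - pfaff 9 := by
          show (-a * c - e * g - e * k - f * n : RG2) = _
          rw [show pfaff 1 = ((-f) * n - e * k + h * (-d) : RG2) from rfl, show pfaff 9 = (g * e - h * d + a * c : RG2) from rfl]
          ring
        rw [h]
        exact (Ideal.sub_mem _ (memPf 1) (memPf 9))
      · show MB 1 2 ∈ Ideal.span (Set.range pfaff ∪ {a ^ 2 - g * l + f * (h + b)})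
        have h : MB 1 2 = pfaff 7 := by
          show (a * m - c * g + d * e : RG2) = _
          rw [show pfaff 7 = (e * d - g * c + a * m : RG2) from rfl]
          ring
        rw [h]
        exact (memPf 7)
      · show MB 2 0 ∈ Ideal.span (Set.range pfaff ∪ {a ^ 2 - g * l + f * (h + b)})
        have h : MB 2 0 = -pfaff 5 - pfaff 18 := by
          show (-a * k + b * b + b * h + d * l : RG2) = _
          rw [show pfaff 5 = ((-f) * e - h * b + a * k : RG2) from rfl, show pfaff 18 = (e * f - l * d + b * (-b) : RG2) from rfl]
          ring
        rw [h]
        exact (Ideal.sub_mem _ (neg_mem (memPf 5)) (memPf 18))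
      · show MB 2 1 ∈ Ideal.span (Set.range pfaff ∪ {a ^ 2 - g * l + f * (h + b)})
        have h : MB 2 1 = -pfaff 4 + pfaff 15 := by
          show (-a * e - b * k - c * l : RG2) = _
          rw [show pfaff 4 = ((-f) * d - g * b + a * e : RG2) from rfl, show pfaff 15 = ((-d) * f - l * c + b * (-g - k) : RG2) from rfl]
          ring
        rw [h]
        exact (Ideal.add_mem _ (neg_mem (memPf 4)) (memPf 15))
      · show MB 2 2 ∈ Ideal.span (Set.range pfaff ∪ {a ^ 2 - g * l + f * (h + b)})
        have h : MB 2 2 = pfaff 1 - pfaff 9 + pfaff 11 := by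
          show (-a * c + b * d - f * n + l * m : RG2) = _
          rw [show pfaff 1 = ((-f) * n - e * k + h * (-d) : RG2) from rfl, show pfaff 9 = (g * e - h * d + a * c : RG2) from rfl, show pfaff 11 = ((-d) * (-b) - e * (-g - k) + l * m : RG2) from rfl]
          ring
        rw [h]
        exact (Ideal.add_mem _ (Ideal.sub_mem _ (memPf 1) (memPf 9)) (memPf 11))
    · obtain ⟨i1, j1⟩ := p
      fin_cases i1 <;> fin_cases j1
      · show MC 0 0 ∈ Ideal.span (Set.range pfaff ∪ {a ^ 2 - g * l + f * (h + b)})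
        have h : MC 0 0 = pfaff 1 := by
          show (-d * h - e * k - f * n : RG2) = _
          rw [show pfaff 1 = ((-f) * n - e * k + h * (-d) : RG2) from rfl]
          ring
        rw [h]
        exact (memPf 1)
      · show MC 0 1 ∈ Ideal.span (Set.range pfaff ∪ {a ^ 2 - g * l + f * (h + b)})
        have h : MC 0 1 = -pfaff 2 + pfaff 3 := by
          show (a * d + b * e + e * h - g * k : RG2) = _
          rw [show pfaff 2 = ((-f) * c - e * b + a * (-d) : RG2) from rfl, show pfaff 3 = ((-f) * c - g * k + h * e : RG2) from rfl]
          ring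
        rw [h]
        exact (Ideal.add_mem _ (neg_mem (memPf 2)) (memPf 3))
      · show MC 0 2 ∈ Ideal.span (Set.range pfaff ∪ {a ^ 2 - g * l + f * (h + b)})
        have h : MC 0 2 = -pfaff 5 - pfaff 18 := by
          show (-a * k + b * b + b * h + d * l : RG2) = _
          rw [show pfaff 5 = ((-f) * e - h * b + a * k : RG2) from rfl, show pfaff 18 = (e * f - l * d + b * (-b) : RG2) from rfl]
          ring
        rw [h]
        exact (Ideal.sub_mem _ (neg_mem (memPf 5)) (memPf 18))
      · show MC 1 0 ∈ Ideal.span (Set.range pfaff ∪ {a ^ 2 - g * l + f * (h + b)})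
        have h : MC 1 0 = -pfaff 17 := by
          show (-b * c + d * k - e * e : RG2) = _
          rw [show pfaff 17 = (e * e - k * d + b * c : RG2) from rfl]
          ring
        rw [h]
        exact (neg_mem (memPf 17))
      · show MC 1 1 ∈ Ideal.span (Set.range pfaff ∪ {a ^ 2 - g * l + f * (h + b)})
        have h : MC 1 1 = pfaff 1 - pfaff 9 := by
          show (-a * c - e * g - e * k - f * n : RG2) = _
          rw [show pfaff 1 = ((-f) * n - e * k + h * (-d) : RG2) from rfl, show pfaff 9 = (g * e - h * d + a * c : RG2) from rfl]
          ring
        rw [h]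
        exact (Ideal.sub_mem _ (memPf 1) (memPf 9))
      · show MC 1 2 ∈ Ideal.span (Set.range pfaff ∪ {a ^ 2 - g * l + f * (h + b)})
        have h : MC 1 2 = -pfaff 4 + pfaff 15 := by
          show (-a * e - b * k - c * l : RG2) = _
          rw [show pfaff 4 = ((-f) * d - g * b + a * e : RG2) from rfl, show pfaff 15 = ((-d) * f - l * c + b * (-g - k) : RG2) from rfl]
          ring
        rw [h]
        exact (Ideal.add_mem _ (neg_mem (memPf 4)) (memPf 15))
      · show MC 2 0 ∈ Ideal.span (Set.range pfaff ∪ {a ^ 2 - g * l + f * (h + b)})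
        have h : MC 2 0 = pfaff 12 := by
          show (b * m - c * e - d * d : RG2) = _
          rw [show pfaff 12 = ((-d) * d - e * c + b * m : RG2) from rfl]
          ring
        rw [h]
        exact (memPf 12)
      · show MC 2 1 ∈ Ideal.span (Set.range pfaff ∪ {a ^ 2 - g * l + f * (h + b)})
        have h : MC 2 1 = pfaff 7 := by
          show (a * m - c * g + d * e : RG2) = _
          rw [show pfaff 7 = (e * d - g * c + a * m : RG2) from rfl]
          ring
        rw [h]
        exact (memPf 7)
      · show MC 2 2 ∈ Ideal.span (Set.range pfaff ∪ {a ^ 2 - g * l + f * (h + b)})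
        have h : MC 2 2 = pfaff 1 - pfaff 9 + pfaff 11 := by
          show (-a * c + b * d - f * n + l * m : RG2) = _
          rw [show pfaff 1 = ((-f) * n - e * k + h * (-d) : RG2) from rfl, show pfaff 9 = (g * e - h * d + a * c : RG2) from rfl, show pfaff 11 = ((-d) * (-b) - e * (-g - k) + l * m : RG2) from rfl]
          ring
        rw [h]
        exact (Ideal.add_mem _ (Ideal.sub_mem _ (memPf 1) (memPf 9)) (memPf 11))
    · obtain ⟨i1, j1⟩ := p
      fin_cases i1 <;> fin_cases j1
      · show MD 0 0 ∈ Ideal.span (Set.range pfaff ∪ {a ^ 2 - g * l + f * (h + b)})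
        have h : MD 0 0 = pfaff 21 := by
          show (c * c - d * n + e * m : RG2) = _
          rw [show pfaff 21 = (m * e - n * d + c * c : RG2) from rfl]
          ring
        rw [h]
        exact (memPf 21)
      · show MD 0 1 ∈ Ideal.span (Set.range pfaff ∪ {a ^ 2 - g * l + f * (h + b)})
        have h : MD 0 1 = -pfaff 10 := by
          show (c * d + e * n - k * m : RG2) = _
          rw [show pfaff 10 = ((-d) * c - e * n + k * m : RG2) from rfl]
          ring
        rw [h]
        exact (neg_mem (memPf 10))
      · show MD 0 2 ∈ Ideal.span (Set.range pfaff ∪ {a ^ 2 - g * l + f * (h + b)})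
        have h : MD 0 2 = pfaff 14 := by
          show (b * n - c * k - d * e : RG2) = _
          rw [show pfaff 14 = ((-d) * e - k * c + b * n : RG2) from rfl]
          ring
        rw [h]
        exact (memPf 14)
      · show MD 1 0 ∈ Ideal.span (Set.range pfaff ∪ {a ^ 2 - g * l + f * (h + b)})
        have h : MD 1 0 = -pfaff 10 := by
          show (c * d + e * n - k * m : RG2) = _
          rw [show pfaff 10 = ((-d) * c - e * n + k * m : RG2) from rfl]
          ring
        rw [h]
        exact (neg_mem (memPf 10))
      · show MD 1 1 ∈ Ideal.span (Set.range pfaff ∪ {a ^ 2 - g * l + f * (h + b)})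
        have h : MD 1 1 = -pfaff 6 - pfaff 12 := by
          show (-b * m + d * d + g * n - h * m : RG2) = _
          rw [show pfaff 6 = (e * c - g * n + h * m : RG2) from rfl, show pfaff 12 = ((-d) * d - e * c + b * m : RG2) from rfl]
          ring
        rw [h]
        exact (Ideal.sub_mem _ (neg_mem (memPf 6)) (memPf 12))
      · show MD 1 2 ∈ Ideal.span (Set.range pfaff ∪ {a ^ 2 - g * l + f * (h + b)})
        have h : MD 1 2 = pfaff 8 - pfaff 17 := by
          show (a * n - b * c - c * h + d * k : RG2) = _
          rw [show pfaff 8 = (e * e - h * c + a * n : RG2) from rfl, show pfaff 17 = (e * e - k * d + b * c : RG2) from rfl]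
          ring
        rw [h]
        exact (Ideal.sub_mem _ (memPf 8) (memPf 17))
      · show MD 2 0 ∈ Ideal.span (Set.range pfaff ∪ {a ^ 2 - g * l + f * (h + b)})
        have h : MD 2 0 = pfaff 14 := by
          show (b * n - c * k - d * e : RG2) = _
          rw [show pfaff 14 = ((-d) * e - k * c + b * n : RG2) from rfl]
          ring
        rw [h]
        exact (memPf 14)
      · show MD 2 1 ∈ Ideal.span (Set.range pfaff ∪ {a ^ 2 - g * l + f * (h + b)})
        have h : MD 2 1 = pfaff 8 - pfaff 17 := by
          show (a * n - b * c - c * h + d * k : RG2) = _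
          rw [show pfaff 8 = (e * e - h * c + a * n : RG2) from rfl, show pfaff 17 = (e * e - k * d + b * c : RG2) from rfl]
          ring
        rw [h]
        exact (Ideal.sub_mem _ (memPf 8) (memPf 17))
      · show MD 2 2 ∈ Ideal.span (Set.range pfaff ∪ {a ^ 2 - g * l + f * (h + b)})
        have h : MD 2 2 = -pfaff 2 + pfaff 3 + pfaff 13 := by
          show (b * e + e * h + k * k + l * n : RG2) = _
          rw [show pfaff 2 = ((-f) * c - e * b + a * (-d) : RG2) from rfl, show pfaff 3 = ((-f) * c - g * k + h * e : RG2) from rfl, show pfaff 13 = ((-d) * a - k * (-g - k) + l * n : RG2) from rfl]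
          ring
        rw [h]
        exact (Ideal.add_mem _ (Ideal.add_mem _ (neg_mem (memPf 2)) (memPf 3)) (memPf 13))


end G2toLG36
end
end
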